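/- arXiv:1902.06809 — 3 statements merged into one kernel-verified Lean document; each statement's English description precedes it below -/
import Mathlib

section
/- Let σ be a permutation in S_d whose cycle decomposition contains a unique cycle of maximal length, and suppose that maximal length is a prime p. Then σ^{(p-1)!} is a p-cycle. -/
/-- If the cycle decomposition of `σ ∈ S_d` contains a unique cycle of maximal length,
and that maximal length is a prime `p`, then `σ ^ (p-1)!` is a `p`-cycle. -/
theorem stmt1 (d : ℕ) (σ : Equiv.Perm (Fin d))
    (p : ℕ) (hp : p.Prime)
    (hmem : p ∈ σ.cycleType) (huniq : σ.cycleType.count p = 1)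
    (hmax : ∀ q ∈ σ.cycleType, q ≤ p) :
    (σ ^ (p - 1).factorial).IsCycle ∧ (σ ^ (p - 1).factorial).support.card = p := by
  classical
  set n := (p - 1).factorial with hn
  obtain ⟨c, τ, rfl, hdisj, hc, hcard⟩ := Equiv.Perm.mem_cycleType_iff.mp hmem
  have hct : (c * τ).cycleType = c.cycleType + τ.cycleType := Equiv.Perm.Disjoint.cycleType_mul hdisj
  have hcc : c.cycleType = {p} := by
    have := hc.cycleType
    rw [hcard] at this
    simpa using this
  -- every cycle length of τ is < p
  have hτlt : ∀ q ∈ τ.cycleType, q < p := by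
    intro q hq
    have hle : q ≤ p := hmax q (by rw [hct]; exact Multiset.mem_add.mpr (Or.inr hq))
    rcases lt_or_eq_of_le hle with h | h
    · exact h
    · exfalso
      subst h
      have : (c * τ).cycleType.count q = 1 + τ.cycleType.count q := by
        rw [hct, hcc, Multiset.count_add, Multiset.count_singleton_self]
      rw [huniq] at this
      have : τ.cycleType.count q = 0 := by omega
      exact (Multiset.count_eq_zero.mp this) hq
  -- τ ^ n = 1
  have hτ1 : τ ^ n = 1 := by
    rw [← orderOf_dvd_iff_pow_eq_one, ← Equiv.Perm.lcm_cycleType]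
    apply Multiset.lcm_dvd.mpr
    intro q hq
    have h2 : 2 ≤ q := Equiv.Perm.two_le_of_mem_cycleType hq
    exact Nat.dvd_factorial (by omega) (by have := hτlt q hq; omega)
  have hcomm : Commute c τ := Equiv.Perm.Disjoint.commute hdisj
  have hpow : (c * τ) ^ n = c ^ n := by
    rw [hcomm.mul_pow, hτ1, mul_one]
  -- orderOf c = p, and n is coprime to p
  have hord : orderOf c = p := by rw [hc.orderOf, hcard]
  have hcop : n.Coprime (orderOf c) := by
    rw [hord, Nat.coprime_comm]
    rw [hp.coprime_iff_not_dvd]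
    intro hdvd
    have := (Nat.Prime.dvd_factorial hp).mp hdvd
    have := hp.two_le
    omega
  refine ⟨?_, ?_⟩
  · rw [hpow]; exact (hc.pow_iff).mpr hcop
  · rw [hpow, Equiv.Perm.support_pow_coprime hcop, hcard]
end

section
/- If a subgroup G of S_d contains both a d-cycle and a (d-1)-cycle, then G acts 2-transitively on {1,...,d}. -/
/-- If a subgroup `G` of `S_d` contains a `d`-cycle and a `(d-1)`-cycle, then `G` acts
2-transitively on `{1,…,d}`. -/
theorem stmt3 (d : ℕ) (G : Subgroup (Equiv.Perm (Fin d)))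
    (g₁ : Equiv.Perm (Fin d)) (hg₁ : g₁ ∈ G) (hc₁ : g₁.IsCycle)
    (hs₁ : g₁.support.card = d)
    (g₂ : Equiv.Perm (Fin d)) (hg₂ : g₂ ∈ G) (hc₂ : g₂.IsCycle)
    (hs₂ : g₂.support.card = d - 1) :
    ∀ i₁ i₂ j₁ j₂ : Fin d, i₁ ≠ i₂ → j₁ ≠ j₂ →
      ∃ g ∈ G, g i₁ = j₁ ∧ g i₂ = j₂ := by
  intro i₁ i₂ j₁ j₂ hij hjj
  -- g₁ has full support
  have hfull : g₁.support = Finset.univ := by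
    apply Finset.eq_univ_of_card
    simpa using hs₁
  have hmove : ∀ x : Fin d, g₁ x ≠ x := by
    intro x
    have : x ∈ g₁.support := by rw [hfull]; exact Finset.mem_univ x
    exact Equiv.Perm.mem_support.mp this
  have hd : 1 ≤ d := by
    rcases Nat.eq_zero_or_pos d with h | h
    · subst h; exact i₁.elim0
    · exact h
  -- the fixed point of g₂
  have hcompl : g₂.supportᶜ.card = 1 := by
    rw [Finset.card_compl, hs₂]
    simp [Fintype.card_fin]
    omega
  obtain ⟨a, ha⟩ := Finset.card_eq_one.mp hcompl
  have hafix : g₂ a = a := by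
    have : a ∈ g₂.supportᶜ := by rw [ha]; exact Finset.mem_singleton_self a
    simpa [Equiv.Perm.mem_support] using Finset.mem_compl.mp this
  have hsupp : ∀ x : Fin d, x ≠ a → x ∈ g₂.support := by
    intro x hx
    by_contra h
    have : x ∈ g₂.supportᶜ := Finset.mem_compl.mpr h
    rw [ha, Finset.mem_singleton] at this
    exact hx this
  -- transitivity via g₁ : move any point to a
  have htrans : ∀ x : Fin d, ∃ h ∈ G, h x = a := by
    intro x
    rcases eq_or_ne x a with rfl | hx
    · exact ⟨1, G.one_mem, rfl⟩
    · obtain ⟨n, hn⟩ := hc₁.sameCycle (hmove x) (hmove a)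
      exact ⟨g₁ ^ n, G.zpow_mem hg₁ n, hn⟩
  obtain ⟨h₁, hh₁, hh₁a⟩ := htrans i₁
  obtain ⟨h₂, hh₂, hh₂a⟩ := htrans j₁
  -- h₁ i₂ and h₂ j₂ are in support of g₂
  have hi₂ : h₁ i₂ ≠ a := fun h => hij (h₁.injective (by rw [hh₁a, h]))
  have hj₂ : h₂ j₂ ≠ a := fun h => hjj (h₂.injective (by rw [hh₂a, h]))
  obtain ⟨m, hm⟩ := hc₂.sameCycle
    (Equiv.Perm.mem_support.mp (hsupp _ hi₂))
    (Equiv.Perm.mem_support.mp (hsupp _ hj₂))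
  have hfixpow : (g₂ ^ m) a = a :=
    Equiv.Perm.zpow_apply_eq_self_of_apply_eq_self hafix m
  refine ⟨h₂⁻¹ * (g₂ ^ m) * h₁, G.mul_mem (G.mul_mem (G.inv_mem hh₂) (G.zpow_mem hg₂ m)) hh₁, ?_, ?_⟩
  · simp only [Equiv.Perm.mul_apply, hh₁a, hfixpow]
    exact h₂.injective (by rw [Equiv.Perm.coe_inv, Equiv.apply_symm_apply, hh₂a])
  · simp only [Equiv.Perm.mul_apply, hm]
    exact h₂.injective (by rw [Equiv.Perm.coe_inv, Equiv.apply_symm_apply])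
end

section
/- In the Grassmannian Gr(2,4) of 2-dimensional subspaces of a 4-dimensional vector space V over an algebraically closed field, if m₁ and m₂ are two distinct 2-planes each meeting three pairwise 'general' fixed 2-planes ℓ₁, ℓ₂, ℓ₃ nontrivially (where ℓ₁, ℓ₂, ℓ₃ pairwise intersect only in 0), then m₁ ∩ m₂ = 0; i.e., any two distinct common transversals to three pairwise transverse 2-planes in C⁴ are themselves transverse. -/
/-!
A common transversal `m` of `ℓ₁, ℓ₂, ℓ₃` is spanned by a point `a ∈ ℓ₁` and a point `b ∈ ℓ₂`,
and once `a` is fixed, `b` is pinned down by requiring `a + b ∈ ℓ₃`, since `ℓ₂ ⊓ ℓ₃ = ⊥`.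
So a transversal is determined by any of its nonzero points on `ℓ₁` (or, symmetrically, on `ℓ₂`).
A vector common to two transversals splits, along `ℓ₁ ⊕ ℓ₂`, into points shared by both of them
on `ℓ₁` and on `ℓ₂`; if the transversals differ, both points, hence the vector, must vanish.
-/

namespace Submodule

variable {K V : Type*} [DivisionRing K] [AddCommGroup V] [Module K V]

theorem add_eq_add_of_disjoint {p q : Submodule K V} (hpq : Disjoint p q) {x x' y y' : V}
    (hx : x ∈ p) (hx' : x' ∈ p) (hy : y ∈ q) (hy' : y' ∈ q) (h : x + y = x' + y') :
    x = x' ∧ y = y' := by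
  have hxy : x - x' = y' - y := by rw [sub_eq_sub_iff_add_eq_add, h, add_comm]
  have hx0 : x - x' = 0 :=
    disjoint_def.mp hpq _ (p.sub_mem hx hx') (hxy ▸ q.sub_mem hy' hy)
  rw [sub_eq_zero] at hx0
  subst hx0
  exact ⟨rfl, add_left_cancel h⟩

theorem linearIndependent_pair_of_disjoint {p q : Submodule K V} (hpq : Disjoint p q)
    {a b : V} (ha : a ∈ p) (hb : b ∈ q) (ha0 : a ≠ 0) (hb0 : b ≠ 0) :
    LinearIndependent K ![a, b] := by
  refine (LinearIndependent.pair_iff' ha0).mpr fun c hc ↦ hb0 ?_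
  exact disjoint_def.mp hpq b (hc ▸ p.smul_mem c ha) hb

theorem eq_span_pair_of_finrank_eq_two {m p q : Submodule K V} (hm : Module.finrank K m = 2)
    (hpq : Disjoint p q) {a b : V} (ham : a ∈ m) (hbm : b ∈ m) (ha : a ∈ p) (hb : b ∈ q)
    (ha0 : a ≠ 0) (hb0 : b ≠ 0) :
    m = span K {a, b} := by
  have : FiniteDimensional K m := Module.finite_of_finrank_pos (by omega)
  have hle : span K {a, b} ≤ m := by
    rw [span_le]
    rintro x (rfl | rfl) <;> assumption
  have hrank : Module.finrank K (span K {a, b}) = 2 := by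
    have := finrank_span_eq_card (linearIndependent_pair_of_disjoint hpq ha hb ha0 hb0)
    rwa [Matrix.range_cons_cons_empty, Fintype.card_fin] at this
  exact (eq_of_le_of_finrank_le hle (by rw [hm, hrank])).symm

theorem eq_inf_sup_inf_of_finrank_eq_two {m p q : Submodule K V} (hm : Module.finrank K m = 2)
    (hpq : Disjoint p q) (hmp : m ⊓ p ≠ ⊥) (hmq : m ⊓ q ≠ ⊥) :
    m = m ⊓ p ⊔ m ⊓ q := by
  obtain ⟨a, ha, ha0⟩ := exists_mem_ne_zero_of_ne_bot hmp
  obtain ⟨b, hb, hb0⟩ := exists_mem_ne_zero_of_ne_bot hmq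
  refine le_antisymm ?_ (sup_le inf_le_left inf_le_left)
  conv_lhs => rw [eq_span_pair_of_finrank_eq_two hm hpq ha.1 hb.1 ha.2 hb.2 ha0 hb0]
  rw [span_le]
  rintro x (rfl | rfl)
  exacts [mem_sup_left ha, mem_sup_right hb]

section Transversal

variable {ℓ₁ ℓ₂ ℓ₃ : Submodule K V}

theorem exists_eq_span_pair_of_transversal {m : Submodule K V}
    (h12 : Disjoint ℓ₁ ℓ₂) (h13 : Disjoint ℓ₁ ℓ₃) (h23 : Disjoint ℓ₂ ℓ₃)
    (hm : Module.finrank K m = 2)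
    (hm₂ : m ⊓ ℓ₂ ≠ ⊥) (hm₃ : m ⊓ ℓ₃ ≠ ⊥) {a : V} (ham : a ∈ m) (ha : a ∈ ℓ₁) (ha0 : a ≠ 0) :
    ∃ b ∈ ℓ₂, a + b ∈ ℓ₃ ∧ m = span K {a, b} := by
  obtain ⟨b₀, ⟨hb₀m, hb₀⟩, hb₀0⟩ := exists_mem_ne_zero_of_ne_bot hm₂
  obtain ⟨c, ⟨hcm, hc⟩, hc0⟩ := exists_mem_ne_zero_of_ne_bot hm₃
  have hcspan : c ∈ span K {a, b₀} :=
    eq_span_pair_of_finrank_eq_two hm h12 ham hb₀m ha hb₀ ha0 hb₀0 ▸ hcm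
  obtain ⟨α, β, rfl⟩ := mem_span_pair.mp hcspan
  have hα : α ≠ 0 := by
    rintro rfl
    exact hc0 (disjoint_def.mp h23 _ (by simpa using ℓ₂.smul_mem β hb₀) hc)
  have hβ : β ≠ 0 := by
    rintro rfl
    exact hc0 (disjoint_def.mp h13 _ (by simpa using ℓ₁.smul_mem α ha) hc)
  have hsum : a + (α⁻¹ * β) • b₀ = α⁻¹ • (α • a + β • b₀) := by
    rw [smul_add, smul_smul, smul_smul, inv_mul_cancel₀ hα, one_smul]
  refine ⟨(α⁻¹ * β) • b₀, ℓ₂.smul_mem _ hb₀, hsum ▸ ℓ₃.smul_mem _ hc, ?_⟩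
  exact eq_span_pair_of_finrank_eq_two hm h12 ham (m.smul_mem _ hb₀m) ha (ℓ₂.smul_mem _ hb₀)
    ha0 (smul_ne_zero (mul_ne_zero (inv_ne_zero hα) hβ) hb₀0)

theorem transversal_eq_of_mem_of_mem {m₁ m₂ : Submodule K V}
    (h12 : Disjoint ℓ₁ ℓ₂) (h13 : Disjoint ℓ₁ ℓ₃) (h23 : Disjoint ℓ₂ ℓ₃)
    (hm₁ : Module.finrank K m₁ = 2) (hm₂ : Module.finrank K m₂ = 2)
    (hm₁ℓ₂ : m₁ ⊓ ℓ₂ ≠ ⊥) (hm₁ℓ₃ : m₁ ⊓ ℓ₃ ≠ ⊥) (hm₂ℓ₂ : m₂ ⊓ ℓ₂ ≠ ⊥) (hm₂ℓ₃ : m₂ ⊓ ℓ₃ ≠ ⊥)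
    {a : V} (ha₁ : a ∈ m₁) (ha₂ : a ∈ m₂) (ha : a ∈ ℓ₁) (ha0 : a ≠ 0) :
    m₁ = m₂ := by
  obtain ⟨b₁, hb₁, hab₁, rfl⟩ :=
    exists_eq_span_pair_of_transversal h12 h13 h23 hm₁ hm₁ℓ₂ hm₁ℓ₃ ha₁ ha ha0
  obtain ⟨b₂, hb₂, hab₂, rfl⟩ :=
    exists_eq_span_pair_of_transversal h12 h13 h23 hm₂ hm₂ℓ₂ hm₂ℓ₃ ha₂ ha ha0
  obtain rfl : b₁ = b₂ := (add_eq_add_of_disjoint h23 hb₁ hb₂ hab₂ hab₁ (by abel)).1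
  rfl

end Transversal

end Submodule

theorem stmt19_general (K V : Type*) [Field K] [AddCommGroup V] [Module K V]
    (ℓ₁ ℓ₂ ℓ₃ m₁ m₂ : Submodule K V)
    (hm₁ : Module.finrank K m₁ = 2) (hm₂ : Module.finrank K m₂ = 2)
    (h12 : ℓ₁ ⊓ ℓ₂ = ⊥) (h13 : ℓ₁ ⊓ ℓ₃ = ⊥) (h23 : ℓ₂ ⊓ ℓ₃ = ⊥)
    (hm₁ℓ₁ : m₁ ⊓ ℓ₁ ≠ ⊥) (hm₁ℓ₂ : m₁ ⊓ ℓ₂ ≠ ⊥) (hm₁ℓ₃ : m₁ ⊓ ℓ₃ ≠ ⊥)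
    (hm₂ℓ₁ : m₂ ⊓ ℓ₁ ≠ ⊥) (hm₂ℓ₂ : m₂ ⊓ ℓ₂ ≠ ⊥) (hm₂ℓ₃ : m₂ ⊓ ℓ₃ ≠ ⊥)
    (hne : m₁ ≠ m₂) :
    m₁ ⊓ m₂ = ⊥ := by
  rw [← disjoint_iff] at h12 h13 h23 ⊢
  rw [Submodule.disjoint_def]
  intro v hv₁ hv₂
  rw [Submodule.eq_inf_sup_inf_of_finrank_eq_two hm₁ h12 hm₁ℓ₁ hm₁ℓ₂, Submodule.mem_sup] at hv₁
  rw [Submodule.eq_inf_sup_inf_of_finrank_eq_two hm₂ h12 hm₂ℓ₁ hm₂ℓ₂, Submodule.mem_sup] at hv₂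
  obtain ⟨x, ⟨hx₁, hx⟩, y, ⟨hy₁, hy⟩, rfl⟩ := hv₁
  obtain ⟨x', ⟨hx₂, hx'⟩, y', ⟨hy₂, hy'⟩, hxy⟩ := hv₂
  obtain ⟨rfl, rfl⟩ := Submodule.add_eq_add_of_disjoint h12 hx hx' hy hy' hxy.symm
  have hx0 : x = 0 := by
    by_contra hx0
    exact hne <| Submodule.transversal_eq_of_mem_of_mem h12 h13 h23 hm₁ hm₂
      hm₁ℓ₂ hm₁ℓ₃ hm₂ℓ₂ hm₂ℓ₃ hx₁ hx₂ hx hx0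
  have hy0 : y = 0 := by
    by_contra hy0
    exact hne <| Submodule.transversal_eq_of_mem_of_mem h12.symm h23 h13 hm₁ hm₂
      hm₁ℓ₁ hm₁ℓ₃ hm₂ℓ₁ hm₂ℓ₃ hy₁ hy₂ hy hy0
  rw [hx0, hy0, add_zero]

/-- In a 4-dimensional vector space over an algebraically closed field, let `ℓ₁, ℓ₂, ℓ₃`
be pairwise transverse 2-planes (`ℓᵢ ∩ ℓⱼ = 0` for `i ≠ j`).  If `m₁ ≠ m₂` are 2-planes
each meeting all three `ℓᵢ` nontrivially, then `m₁ ∩ m₂ = 0`. -/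
theorem stmt19 (K V : Type*) [Field K] [IsAlgClosed K] [AddCommGroup V] [Module K V]
    (hV : Module.finrank K V = 4)
    (ℓ₁ ℓ₂ ℓ₃ m₁ m₂ : Submodule K V)
    (hℓ₁ : Module.finrank K ℓ₁ = 2) (hℓ₂ : Module.finrank K ℓ₂ = 2)
    (hℓ₃ : Module.finrank K ℓ₃ = 2)
    (hm₁ : Module.finrank K m₁ = 2) (hm₂ : Module.finrank K m₂ = 2)
    (h12 : ℓ₁ ⊓ ℓ₂ = ⊥) (h13 : ℓ₁ ⊓ ℓ₃ = ⊥) (h23 : ℓ₂ ⊓ ℓ₃ = ⊥)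
    (hm₁ℓ₁ : m₁ ⊓ ℓ₁ ≠ ⊥) (hm₁ℓ₂ : m₁ ⊓ ℓ₂ ≠ ⊥) (hm₁ℓ₃ : m₁ ⊓ ℓ₃ ≠ ⊥)
    (hm₂ℓ₁ : m₂ ⊓ ℓ₁ ≠ ⊥) (hm₂ℓ₂ : m₂ ⊓ ℓ₂ ≠ ⊥) (hm₂ℓ₃ : m₂ ⊓ ℓ₃ ≠ ⊥)
    (hne : m₁ ≠ m₂) :
    m₁ ⊓ m₂ = ⊥ :=
  stmt19_general K V ℓ₁ ℓ₂ ℓ₃ m₁ m₂ hm₁ hm₂ h12 h13 h23 hm₁ℓ₁ hm₁ℓ₂ hm₁ℓ₃ hm₂ℓ₁ hm₂ℓ₂ hm₂ℓ₃ hne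
end
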